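/- For every λ ∈ ℂ with λ ≠ μ0 lying in the closed disk of centre (μ0 + Λ_0)/2 and radius (Λ_0 − μ0)/2, one has dist(λ, J) = |λ − Λ_0| and dist(φ(λ), φ(J)) = |φ(λ) − (Λ_0 − μ0)⁻¹| = |λ − Λ_0| / (|λ − μ0| · (Λ_0 − μ0)). -/

import Mathlib

lemma abs_le_of_normSq_le {x y : ℂ} (h : Complex.normSq x ≤ Complex.normSq y) :
    ‖x‖ ≤ ‖y‖ := by
  rw [← Complex.sq_norm, ← Complex.sq_norm] at h
  exact le_of_pow_le_pow_left₀ two_ne_zero (norm_nonneg y) h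

lemma le_infDist' {s : Set ℂ} (hs : s.Nonempty) {x : ℂ} {b : ℝ}
    (h : ∀ y ∈ s, b ≤ dist x y) : b ≤ Metric.infDist x s := by
  by_contra hlt
  push_neg at hlt
  obtain ⟨y, hy, hdy⟩ := (Metric.infDist_lt_iff hs).mp hlt
  exact absurd (h y hy) (not_le.mpr hdy)

/-- Second sector in the proof of Lemma 2.2: for `λ ≠ μ0` in the closed disk of
centre `(μ0 + Λ0)/2` and radius `(Λ0 - μ0)/2` one has `dist(λ, J) = |λ - Λ0|` and
`dist(φ(λ), φ(J)) = |φ(λ) - (Λ0 - μ0)⁻¹| = |λ - Λ0| / (|λ - μ0| (Λ0 - μ0))`. -/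
theorem stmt_6 (μ0 Λ0 : ℝ) (hμ0 : μ0 < 0) (hΛ0 : 0 ≤ Λ0) :
    ∀ lam : ℂ, lam ≠ (μ0 : ℂ) →
      lam ∈ Metric.closedBall ((((μ0 + Λ0) / 2 : ℝ)) : ℂ) ((Λ0 - μ0) / 2) →
      Metric.infDist lam (Complex.ofReal '' Set.Ici Λ0) = ‖lam - (Λ0 : ℂ)‖ ∧
      Metric.infDist ((lam - (μ0 : ℂ))⁻¹)
          ((fun z : ℂ => (z - (μ0 : ℂ))⁻¹) '' (Complex.ofReal '' Set.Ici Λ0)) =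
        ‖(lam - (μ0 : ℂ))⁻¹ - (((Λ0 - μ0)⁻¹ : ℝ) : ℂ)‖ ∧
      ‖(lam - (μ0 : ℂ))⁻¹ - (((Λ0 - μ0)⁻¹ : ℝ) : ℂ)‖ =
        ‖lam - (Λ0 : ℂ)‖ / (‖lam - (μ0 : ℂ)‖ * (Λ0 - μ0)) := by
  intro lam hne hball
  have hd : (0:ℝ) < Λ0 - μ0 := by linarith
  set a := lam.re with ha
  set b := lam.im with hb
  -- disk condition in coordinates
  have hball' : (a - (μ0 + Λ0) / 2) ^ 2 + b ^ 2 ≤ ((Λ0 - μ0) / 2) ^ 2 := by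
    have h1 : ‖lam - (((μ0 + Λ0) / 2 : ℝ) : ℂ)‖ ≤ (Λ0 - μ0) / 2 := by
      simpa [Metric.mem_closedBall, Complex.dist_eq] using hball
    have h2 := Complex.sq_norm (lam - (((μ0 + Λ0) / 2 : ℝ) : ℂ))
    have h3 : Complex.normSq (lam - (((μ0 + Λ0) / 2 : ℝ) : ℂ))
        = (a - (μ0 + Λ0) / 2) ^ 2 + b ^ 2 := by
      simp [Complex.normSq_apply, Complex.sub_re, Complex.sub_im]; ring
    nlinarith [norm_nonneg (lam - (((μ0 + Λ0) / 2 : ℝ) : ℂ))]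
  have hRe : a ≤ Λ0 := by nlinarith [sq_nonneg b]
  -- key inequality: (Λ0 - μ0) * (a - μ0) ≥ (a - μ0)^2 + b^2
  have hkey : (a - μ0) ^ 2 + b ^ 2 ≤ (Λ0 - μ0) * (a - μ0) := by nlinarith
  set z := lam - (μ0 : ℂ) with hzdef
  have hz : z ≠ 0 := sub_ne_zero.mpr hne
  have hN : Complex.normSq z = (a - μ0) ^ 2 + b ^ 2 := by
    simp [Complex.normSq_apply, hzdef, Complex.sub_re, Complex.sub_im]; ring
  have hNpos : 0 < Complex.normSq z := Complex.normSq_pos.mpr hz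
  -- first claim
  have part1 : Metric.infDist lam (Complex.ofReal '' Set.Ici Λ0)
      = ‖lam - (Λ0 : ℂ)‖ := by
    apply le_antisymm
    · have hmem : ((Λ0 : ℝ) : ℂ) ∈ Complex.ofReal '' Set.Ici Λ0 :=
        ⟨Λ0, Set.self_mem_Ici, rfl⟩
      simpa [Complex.dist_eq] using Metric.infDist_le_dist_of_mem hmem
    · refine le_infDist' ?_ ?_
      · exact ⟨_, ⟨Λ0, Set.self_mem_Ici, rfl⟩⟩
      rintro y ⟨x, hx, rfl⟩
      rw [Complex.dist_eq]
      apply abs_le_of_normSq_le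
      have hx' : Λ0 ≤ x := hx
      simp only [Complex.normSq_apply, Complex.sub_re, Complex.sub_im,
        Complex.ofReal_re, Complex.ofReal_im]
      nlinarith
  refine ⟨part1, ?_, ?_⟩
  · -- second claim
    have hvre : (z⁻¹).re = (a - μ0) / Complex.normSq z := by
      rw [Complex.inv_re, hzdef]
      simp [Complex.sub_re]
      rfl
    have hret : (Λ0 - μ0)⁻¹ ≤ (z⁻¹).re := by
      rw [hvre, le_div_iff₀ hNpos, hN]
      calc (Λ0 - μ0)⁻¹ * ((a - μ0) ^ 2 + b ^ 2)
          ≤ (Λ0 - μ0)⁻¹ * ((Λ0 - μ0) * (a - μ0)) := by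
            apply mul_le_mul_of_nonneg_left hkey (by positivity)
        _ = a - μ0 := by field_simp
    apply le_antisymm
    · have hmem : (((Λ0 - μ0)⁻¹ : ℝ) : ℂ)
          ∈ (fun w : ℂ => (w - (μ0 : ℂ))⁻¹) '' (Complex.ofReal '' Set.Ici Λ0) := by
        refine ⟨(Λ0 : ℂ), ⟨Λ0, Set.self_mem_Ici, rfl⟩, ?_⟩
        push_cast
        ring
      simpa [Complex.dist_eq] using Metric.infDist_le_dist_of_mem hmem
    · refine le_infDist' ?_ ?_
      · exact ⟨_, ⟨(Λ0:ℂ), ⟨Λ0, Set.self_mem_Ici, rfl⟩, rfl⟩⟩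
      rintro y ⟨w, ⟨x, hx, rfl⟩, rfl⟩
      have hx' : Λ0 ≤ x := hx
      have hxd : (0:ℝ) < x - μ0 := by linarith
      have hxc : ((x : ℂ) - (μ0 : ℂ))⁻¹ = (((x - μ0)⁻¹ : ℝ) : ℂ) := by push_cast; ring
      simp only [Complex.dist_eq]
      rw [hxc]
      apply abs_le_of_normSq_le
      have hsle : (x - μ0)⁻¹ ≤ (Λ0 - μ0)⁻¹ := by
        apply one_div_le_one_div_of_le (b := x - μ0) hd (by linarith) |>.trans_eq (one_div _)
          |>.trans_eq' (one_div _)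
      have hs0 : 0 < (x - μ0)⁻¹ := by positivity
      simp only [Complex.normSq_apply, Complex.sub_re, Complex.sub_im,
        Complex.ofReal_re, Complex.ofReal_im]
      nlinarith [hret, hsle, hs0]
  · -- third claim
    have hdc : ((Λ0 - μ0 : ℝ) : ℂ) ≠ 0 := by
      exact_mod_cast Complex.ofReal_ne_zero.mpr hd.ne'
    have heq : z⁻¹ - (((Λ0 - μ0)⁻¹ : ℝ) : ℂ)
        = ((Λ0 : ℂ) - lam) / (z * ((Λ0 - μ0 : ℝ) : ℂ)) := by
      have h1 : lam - (μ0 : ℂ) ≠ 0 := sub_ne_zero.mpr hne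
      have hdc' : (Λ0 : ℂ) - (μ0 : ℂ) ≠ 0 := by
        intro h; exact hdc (by push_cast; linear_combination h)
      rw [hzdef, Complex.ofReal_inv, eq_div_iff (mul_ne_zero h1 hdc)]
      push_cast
      field_simp
      ring
    rw [heq, norm_div, norm_mul, Complex.norm_real, Real.norm_eq_abs, abs_of_pos hd,
      norm_sub_rev]
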